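/- arXiv:math/0501276 — 2 statements merged into one kernel-verified Lean document; each statement's English description precedes it below -/
import Mathlib

section
/- Let G be a group and f : G → Z(G) a homomorphism. Then the following are equivalent: (I) f is invertible in the monoid Hom(G, Z(G)) with multiplication (f*g)(w) = f(w)g(w)(f∘g)(w)⁻¹; (II) the endomorphism f♭ : w ↦ w·f(w)⁻¹ is an automorphism of G; (III) the restriction of f♭ to Z(G) is an automorphism of Z(G). -/
/-! The map `♭` turns `*` into composition, `(f * g)♭ = f♭ ∘ g♭`, so a two-sided `*`-inverse `f'`
of `f` yields the inverse `f'♭` of `f♭`. If `f♭` is an automorphism, it restricts to one of `Z(G)`: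
a preimage `w` of a central `z` satisfies `w = z · f(w)`, so it is central. Conversely, writing
`ψ` for the restriction, `(f * g)(w) = f(w) · ψ(g(w))`; hence if `ψ` is bijective,
`f' = ψ⁻¹ ∘ f⁻¹` satisfies `f * f' = 1`, and `f' * f = 1` because `ψ(f'(w) · f(w)) = f(f(w))⁻¹`. -/

/-- `f♭(w) = w · f(w)⁻¹`. -/
def flatFun {G : Type*} [Group G] (f : G → Subgroup.center G) : G → G :=
  fun w => w * ((f w : G))⁻¹

/-- `(f*g)(w) = f(w) · g(w) · f(g(w))⁻¹`. -/
def starFun {G : Type*} [Group G] (f g : G → Subgroup.center G) :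
    G → Subgroup.center G :=
  fun w => f w * g w * (f ((g w : G)))⁻¹

section

open Subgroup
open scoped IsMulCommutative

variable {G : Type*} [Group G]

def flatHom (f : G →* center G) : G →* G where
  toFun := flatFun f
  map_one' := by simp [flatFun]
  map_mul' v w := by
    simp only [flatFun, map_mul, coe_mul, mul_inv_rev, ← coe_inv]
    rw [mul_assoc v ((f v)⁻¹ : center G), (mem_center_iff.mp (f v)⁻¹.2 _).symm]
    simp only [mul_assoc]

def centerFlat (f : G →* center G) : center G →* center G where
  toFun z := z * (f z)⁻¹
  map_one' := by simp
  map_mul' z₁ z₂ := by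
    rw [coe_mul, map_mul, mul_inv, mul_mul_mul_comm]

lemma centerFlat_apply (f : G →* center G) (z : center G) :
    centerFlat f z = z * (f z)⁻¹ := rfl

lemma starFun_apply (f : G →* center G) (g : G → center G) (w : G) :
    starFun f g w = f w * centerFlat f (g w) := by
  rw [starFun, centerFlat_apply, mul_assoc]

lemma flatFun_flatFun (f : G →* center G) (g : G → center G) (w : G) :
    flatFun f (flatFun g w) = flatFun (starFun f g) w := by
  simp only [flatFun, starFun, mul_assoc]
  congr 1
  norm_cast
  simp [mul_comm, mul_left_comm]

lemma leftInverse_flatFun_of_starFun_eq_one {f g : G →* center G}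
    (h : starFun f g = fun _ => 1) : Function.LeftInverse (flatFun f) (flatFun g) := fun w => by
  rw [flatFun_flatFun, h]
  simp [flatFun]

lemma exists_mulEquiv_eq_flatFun_of_starFun_eq_one {f f' : G →* center G}
    (h : starFun f f' = fun _ => 1) (h' : starFun f' f = fun _ => 1) :
    ∃ F : G ≃* G, ⇑F = flatFun f :=
  ⟨{ flatHom f with
      invFun := flatFun f'
      left_inv := leftInverse_flatFun_of_starFun_eq_one h'
      right_inv := leftInverse_flatFun_of_starFun_eq_one h }, rfl⟩

lemma bijective_centerFlat_of_bijective_flatFun {f : G →* center G}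
    (h : Function.Bijective (flatFun f)) : Function.Bijective (centerFlat f) := by
  refine ⟨fun z₁ z₂ hz => Subtype.ext (h.1 (congrArg Subtype.val hz)), fun z => ?_⟩
  obtain ⟨w, hw⟩ := h.2 z
  have hw_mem : w ∈ center G := by
    have hw_eq : w = z * f w := by rw [← hw, flatFun, inv_mul_cancel_right]
    exact hw_eq ▸ mul_mem z.2 (f w).2
  exact ⟨⟨w, hw_mem⟩, Subtype.ext hw⟩

lemma exists_starFun_inverse_of_bijective_centerFlat {f : G →* center G}
    (h : Function.Bijective (centerFlat f)) :
    ∃ f' : G →* center G, starFun f f' = (fun _ => 1) ∧ starFun f' f = (fun _ => 1) := by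
  let ψ := MulEquiv.ofBijective (centerFlat f) h
  let f' : G →* center G := ψ.symm.toMonoidHom.comp (invMonoidHom.comp f)
  have hf' : ∀ w, centerFlat f (f' w) = (f w)⁻¹ := fun w => ψ.apply_symm_apply _
  refine ⟨f', funext fun w => ?_, funext fun w => ?_⟩
  · rw [starFun_apply, hf', mul_inv_cancel]
  · have key : f' (f w) = f' w * f w := h.1 <| by
      rw [hf', map_mul, hf', centerFlat_apply, inv_mul_cancel_left]
    rw [starFun, key, mul_inv_cancel]

end

/-- For a homomorphism `f : G → Z(G)`, the following are
equivalent: (I) `f` is invertible in the monoid `Hom(G, Z(G))` under `*`;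
(II) `f♭` is an automorphism of `G`; (III) the restriction of `f♭` to `Z(G)` is
an automorphism of `Z(G)`. -/
theorem stmt_2 {G : Type*} [Group G] (f : G →* Subgroup.center G) :
    ((∃ f' : G →* Subgroup.center G,
        starFun ⇑f ⇑f' = (fun _ => 1) ∧ starFun ⇑f' ⇑f = (fun _ => 1)) ↔
      (∃ F : G ≃* G, ⇑F = flatFun ⇑f)) ∧
    ((∃ F : G ≃* G, ⇑F = flatFun ⇑f) ↔
      Function.Bijective (fun z : Subgroup.center G => z * (f (z : G))⁻¹)) := by
  have I_II : (∃ f' : G →* Subgroup.center G,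
      starFun ⇑f ⇑f' = (fun _ => 1) ∧ starFun ⇑f' ⇑f = (fun _ => 1)) →
      ∃ F : G ≃* G, ⇑F = flatFun ⇑f :=
    fun ⟨_, h, h'⟩ => exists_mulEquiv_eq_flatFun_of_starFun_eq_one h h'
  have II_III : (∃ F : G ≃* G, ⇑F = flatFun ⇑f) → Function.Bijective (centerFlat f) :=
    fun ⟨F, hF⟩ => bijective_centerFlat_of_bijective_flatFun (hF ▸ F.bijective)
  have III_I := exists_starFun_inverse_of_bijective_centerFlat (f := f)
  exact ⟨⟨I_II, III_I ∘ II_III⟩, ⟨II_III, I_II ∘ III_I⟩⟩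
end

section
/- Let (W,S) be an irreducible infinite Coxeter system, s ∈ S, and I = S ∖ {s}. Then the set N_I = {w ∈ W | w·Π_I = Π_I} is trivial, and consequently the normalizer of W_I in W equals W_I itself. -/
/-- The standard bilinear form of a Coxeter matrix on `B →₀ ℝ`:
`⟨α_s, α_t⟩ = -cos (π / m(s,t))`, interpreted as `-1` when `m(s,t) = ∞`
(encoded as `0`). -/
noncomputable def cForm {B : Type*} (M : CoxeterMatrix B) (v w : B →₀ ℝ) : ℝ :=
  v.sum fun s c => w.sum fun t d =>
    c * d * (if M s t = 0 then -1 else -Real.cos (Real.pi / (M s t : ℝ)))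

/-- The simple root `α_s` as a basis vector of `B →₀ ℝ`. -/
noncomputable def simpleRoot {B : Type*} (s : B) : B →₀ ℝ := Finsupp.single s 1

/-!
Let `I = S \ {s}`. The heart of the proof: if `w` maps every `α_t`, `t ∈ I`, to a positive
vector with zero `α_s`-coordinate, then `w = 1`. Otherwise `w` has a right descent, necessarily
`s`, so `w α_s < 0`; since `ρ w` is invertible, the `α_s`-coordinate of `w α_s` is then negative,
and `w` makes negative every positive root with positive `α_s`-coordinate. By Deodhar's lemma
there are infinitely many of those, whereas the inversion set of `w` is finite.

Elements of `N_I` satisfy this hypothesis. If `w` normalizes `W_I`, a shortest `v ∈ w W_I` has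
no right descent in `I`, so `v α_t > 0` for `t ∈ I`, while `v s_t v⁻¹ ∈ W_I` preserves the
`α_s`-coordinate and negates `v α_t`; hence `v = 1` and `w ∈ W_I`.
-/

namespace CoxeterMatrix

variable {B : Type*} (M : CoxeterMatrix B)

def Adj (a b : B) : Prop := a ≠ b ∧ M a b ≠ 2

noncomputable def formCoeff (a b : B) : ℝ :=
  if M a b = 0 then -1 else -Real.cos (Real.pi / M a b)

lemma formCoeff_self (a : B) : M.formCoeff a a = 1 := by
  simp [formCoeff]

lemma formCoeff_comm (a b : B) : M.formCoeff a b = M.formCoeff b a := by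
  simp [formCoeff, M.symmetric a b]

lemma formCoeff_nonpos {a b : B} (h : a ≠ b) : M.formCoeff a b ≤ 0 := by
  unfold formCoeff
  split_ifs with h0
  · norm_num
  · have h2 : (2 : ℝ) ≤ M a b := by
      have := M.off_diagonal a b h
      exact_mod_cast (show 2 ≤ M a b by omega)
    have : Real.pi / M a b ≤ Real.pi / 2 := by gcongr
    have := Real.cos_nonneg_of_mem_Icc
      ⟨by linarith [show 0 ≤ Real.pi / M a b by positivity], this⟩
    linarith

lemma formCoeff_neg {a b : B} (h : M.Adj a b) : M.formCoeff a b < 0 := by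
  unfold formCoeff
  split_ifs with h0
  · norm_num
  · have h3 : (3 : ℝ) ≤ M a b := by
      have := M.off_diagonal a b h.1
      have := h.2
      exact_mod_cast (show 3 ≤ M a b by omega)
    have : Real.pi / M a b ≤ Real.pi / 3 := by gcongr
    have := Real.cos_pos_of_mem_Ioo (x := Real.pi / M a b)
      ⟨by linarith [Real.pi_pos, show 0 ≤ Real.pi / M a b by positivity],
        by linarith [Real.pi_pos]⟩
    linarith

noncomputable def form : (B →₀ ℝ) →ₗ[ℝ] (B →₀ ℝ) →ₗ[ℝ] ℝ :=
  Finsupp.linearCombination ℝ fun a => Finsupp.linearCombination ℝ (M.formCoeff a)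

lemma form_single_single (a b : B) (c d : ℝ) :
    M.form (Finsupp.single a c) (Finsupp.single b d) = c * d * M.formCoeff a b := by
  simp [form, mul_assoc]

lemma form_comm (v w : B →₀ ℝ) : M.form v w = M.form w v := by
  induction v using Finsupp.induction_linear with
  | zero => simp
  | add f g hf hg => simp [hf, hg]
  | single a c =>
    induction w using Finsupp.induction_linear with
    | zero => simp
    | add f g hf hg => simp [hf, hg]
    | single b d => rw [form_single_single, form_single_single, formCoeff_comm]; ring

lemma form_simpleRoot_apply (a : B) (v : B →₀ ℝ) :
    M.form (simpleRoot a) v = v.sum fun b d => d * M.formCoeff a b := by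
  simp [form, simpleRoot, Finsupp.linearCombination_apply]

lemma form_simpleRoot_simpleRoot (a b : B) :
    M.form (simpleRoot a) (simpleRoot b) = M.formCoeff a b := by
  simp [simpleRoot, form_single_single]

lemma cForm_simpleRoot (a : B) (v : B →₀ ℝ) :
    cForm M (simpleRoot a) v = M.form (simpleRoot a) v := by
  rw [form_simpleRoot_apply, cForm, simpleRoot, Finsupp.sum_single_index (by simp)]
  simp [formCoeff]

lemma form_simpleRoot_neg {β : B →₀ ℝ} {a b : B} (hβ : 0 ≤ β) (hab : M.Adj a b)
    (ha : 0 < β a) (hb : β b = 0) : M.form (simpleRoot b) β < 0 := by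
  classical
  rw [M.form_simpleRoot_apply, Finsupp.sum,
    ← Finset.add_sum_erase _ _ (Finsupp.mem_support_iff.2 ha.ne')]
  have hrest : ∑ c ∈ β.support.erase a, β c * M.formCoeff b c ≤ 0 := by
    refine Finset.sum_nonpos fun c _ => ?_
    obtain rfl | hcb := eq_or_ne c b
    · simp [hb]
    · exact mul_nonpos_of_nonneg_of_nonpos (Finsupp.le_def.1 hβ c)
        (M.formCoeff_nonpos hcb.symm)
  have ha' : β a * M.formCoeff b a < 0 :=
    mul_neg_of_pos_of_neg ha (M.formCoeff_neg ⟨hab.1.symm, by rw [M.symmetric]; exact hab.2⟩)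
  linarith

lemma exists_nonneg_seq_formCoeff {a b : B} (hab : a ≠ b) {k : ℕ}
    (hk : M a b = 0 ∨ k < M a b) :
    ∃ c : ℕ → ℝ, c 0 = 0 ∧ c 1 = 1 ∧
      (∀ j, c (j + 2) = -2 * M.formCoeff a b * c (j + 1) - c j) ∧ 0 ≤ c k ∧ 0 ≤ c (k + 1) := by
  rcases hk with hM | hk
  · refine ⟨fun j => j, by simp, by simp, fun j => ?_, by positivity, by positivity⟩
    simp only [formCoeff, hM, if_true]
    push_cast
    ring
  have hM : M a b ≠ 0 := by omega
  set θ := Real.pi / M a b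
  have hθ : 0 < θ := by positivity
  have hsinθ : 0 < Real.sin θ := by
    refine Real.sin_pos_of_pos_of_lt_pi hθ ?_
    have := M.off_diagonal a b hab
    have : (2 : ℝ) ≤ M a b := by exact_mod_cast (show 2 ≤ M a b by omega)
    have : θ ≤ Real.pi / 2 := show Real.pi / M a b ≤ Real.pi / 2 by gcongr
    linarith [Real.pi_pos]
  have hsin_nonneg : ∀ j ≤ M a b, 0 ≤ Real.sin (j * θ) := fun j hj =>
    Real.sin_nonneg_of_nonneg_of_le_pi (by positivity) (by
      rw [← le_div_iff₀ hθ, div_div_cancel₀ Real.pi_pos.ne']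
      exact_mod_cast hj)
  refine ⟨fun j => Real.sin (j * θ) / Real.sin θ, by simp, by simp [hsinθ.ne'], fun j => ?_,
    div_nonneg (hsin_nonneg k hk.le) hsinθ.le, div_nonneg (hsin_nonneg (k + 1) hk) hsinθ.le⟩
  simp only [formCoeff, hM, if_false]
  push_cast
  rw [show ((j : ℝ) + 2) * θ = (j + 1) * θ + θ by ring,
    show (j : ℝ) * θ = (j + 1) * θ - θ by ring, Real.sin_add, Real.sin_sub]
  field_simp
  ring

end CoxeterMatrix

lemma simpleRoot_pos {B : Type*} (a : B) : 0 < simpleRoot a :=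
  lt_of_le_of_ne (Finsupp.single_nonneg.2 zero_le_one) (by simp [simpleRoot, eq_comm])

lemma simpleRoot_apply_self {B : Type*} (a : B) : simpleRoot a a = 1 :=
  Finsupp.single_eq_same

lemma simpleRoot_apply_of_ne {B : Type*} {a b : B} (h : b ≠ a) : simpleRoot a b = 0 :=
  Finsupp.single_eq_of_ne h

lemma LinearMap.apply_apply_eq_mul_of_forall_ne {B : Type*} (f : (B →₀ ℝ) →ₗ[ℝ] (B →₀ ℝ))
    {s : B} (hf : ∀ t ≠ s, f (simpleRoot t) s = 0) (β : B →₀ ℝ) :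
    f β s = β s * f (simpleRoot s) s := by
  induction β using Finsupp.induction_linear with
  | zero => simp
  | add β γ hβ hγ => simp [hβ, hγ, add_mul]
  | single t c =>
    rw [show Finsupp.single t c = c • simpleRoot t by simp [simpleRoot], map_smul]
    obtain rfl | hts := eq_or_ne t s
    · simp [simpleRoot_apply_self]
    · simp [hf t hts, simpleRoot_apply_of_ne hts.symm]

namespace CoxeterSystem

variable {B W : Type*} [Group W] {M : CoxeterMatrix B} (cs : CoxeterSystem M W)

local prefix:100 "π" => cs.wordProd
local prefix:100 "ℓ" => cs.length

lemma exists_simple_mul_wordProd_alternatingWord {a b c : B} (hc : c = a ∨ c = b) (k : ℕ) :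
    ∃ k' ≤ k + 1, cs.simple c * π (alternatingWord a b k) = π (alternatingWord a b k') ∨
      cs.simple c * π (alternatingWord a b k) = π (alternatingWord b a k') := by
  by_cases hnext : c = if Even k then b else a
  · exact ⟨k + 1, le_rfl, Or.inl (by rw [alternatingWord_succ', wordProd_cons, hnext])⟩
  have hprev : c = if Even k then a else b := by
    split_ifs at hnext ⊢ <;> tauto
  rcases k with _ | k
  · exact ⟨1, by omega, Or.inr (by simp_all [alternatingWord])⟩
  · have hhead : c = if Even k then b else a := by
      by_cases he : Even k <;> simp_all [Nat.even_add_one]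
    refine ⟨k, by omega, Or.inl ?_⟩
    rw [alternatingWord_succ', wordProd_cons, ← hhead, simple_mul_simple_cancel_left]

lemma exists_wordProd_eq_alternatingWord {a b : B} (ω : List B)
    (hω : ∀ c ∈ ω, c = a ∨ c = b) :
    ∃ k ≤ ω.length, π ω = π (alternatingWord a b k) ∨ π ω = π (alternatingWord b a k) := by
  induction ω with
  | nil => exact ⟨0, le_rfl, Or.inl rfl⟩
  | cons c ω ih =>
    obtain ⟨k, hk, hω'⟩ := ih fun x hx => hω x (List.mem_cons_of_mem c hx)
    have hc := hω c List.mem_cons_self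
    rw [wordProd_cons]
    rcases hω' with hω' | hω'
    · obtain ⟨k', hk', h⟩ := cs.exists_simple_mul_wordProd_alternatingWord hc k
      exact ⟨k', by simp; omega, hω' ▸ h⟩
    · obtain ⟨k', hk', h⟩ := cs.exists_simple_mul_wordProd_alternatingWord hc.symm k
      exact ⟨k', by simp; omega, hω' ▸ h.symm⟩

lemma isReduced_of_length_mul_wordProd {v : W} {ω : List B}
    (h : ℓ (v * π ω) = ℓ v + ω.length) : cs.IsReduced ω :=
  le_antisymm (cs.length_wordProd_le ω) (by linarith [cs.length_mul_le v (π ω)])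

lemma not_isRightDescent_of_length_mul {v u : W} {t : B} (h : ℓ (v * u) = ℓ v + ℓ u)
    (ht : ¬cs.IsRightDescent (v * u) t) : ¬cs.IsRightDescent u t := by
  intro hu
  apply ht
  unfold IsRightDescent at hu ⊢
  have := cs.length_mul_le v (u * cs.simple t)
  rw [← mul_assoc] at this
  omega

lemma exists_mul_wordProd_forall_not_isRightDescent (w : W) (t t' : B) :
    ∃ (v : W) (ω : List B), (∀ c ∈ ω, c = t ∨ c = t') ∧ w = v * π ω ∧
      ℓ w = ℓ v + ω.length ∧ ¬cs.IsRightDescent v t ∧ ¬cs.IsRightDescent v t' := by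
  let S : Set (W × List B) :=
    {p | (∀ c ∈ p.2, c = t ∨ c = t') ∧ w = p.1 * π p.2 ∧ ℓ w = ℓ p.1 + p.2.length}
  have hS : (w, []) ∈ S := ⟨by simp, by simp [wordProd], by simp⟩
  set p := Function.argminOn (fun p : W × List B => ℓ p.1) S ⟨_, hS⟩
  obtain ⟨hω, hw, hlen⟩ : p ∈ S := Function.argminOn_mem _ _ _
  have hdesc : ∀ c, (c = t ∨ c = t') → ¬cs.IsRightDescent p.1 c := by
    intro c hc hpc
    apply Function.not_lt_argminOn (fun p : W × List B => ℓ p.1) S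
      (a := (p.1 * cs.simple c, c :: p.2))
    · exact hpc
    · refine ⟨by simpa [hc] using hω, by simpa [wordProd_cons, mul_assoc] using hw, ?_⟩
      have := cs.length_mul_simple p.1 c
      unfold IsRightDescent at hpc
      simp only [List.length_cons]
      omega
  exact ⟨p.1, p.2, hω, hw, hlen, hdesc t (Or.inl rfl), hdesc t' (Or.inr rfl)⟩

lemma exists_alternatingWord_of_isReduced {t t' : B} {ω : List B}
    (hω : ∀ c ∈ ω, c = t ∨ c = t') (hred : cs.IsReduced ω)
    (ht : ¬cs.IsRightDescent (π ω) t) :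
    ∃ k, π ω = π (alternatingWord t t' k) ∧ (M t t' = 0 ∨ k < M t t') := by
  obtain ⟨k, hk, hω'⟩ := cs.exists_wordProd_eq_alternatingWord ω hω
  have hlen : ℓ (π ω) = k := by
    have hle : ℓ (π ω) ≤ k := by
      rcases hω' with h | h <;> rw [h] <;>
        simpa using cs.length_wordProd_le (alternatingWord _ _ k)
    have := hred.eq
    omega
  have hlast : ∀ j, j + 1 = k → π ω ≠ π (alternatingWord t' t (j + 1)) := by
    intro j hj h
    apply ht
    have := cs.length_wordProd_le (alternatingWord t t' j)
    rw [length_alternatingWord] at this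
    rw [IsRightDescent, hlen, h, alternatingWord_succ, wordProd_concat,
      simple_mul_simple_cancel_right]
    omega
  have hform : π ω = π (alternatingWord t t' k) := by
    rcases hω' with h | h
    · exact h
    · rcases k with _ | j
      · exact h
      · exact (hlast j rfl h).elim
  refine ⟨k, hform, ?_⟩
  by_cases hM : M t t' = 0
  · exact Or.inl hM
  rcases lt_trichotomy k (M t t') with hlt | rfl | hgt
  · exact Or.inr hlt
  · obtain ⟨j, hj⟩ : ∃ j, M t t' = j + 1 := Nat.exists_eq_succ_of_ne_zero hM
    refine (hlast j hj.symm ?_).elim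
    have hbraid := cs.wordProd_braidWord_eq t t'
    rw [braidWord, braidWord, M.symmetric t' t] at hbraid
    rw [hform, ← hj, hbraid]
  · refine (cs.not_isReduced_alternatingWord t t' hM hgt ?_).elim
    rw [IsReduced, ← hform, hlen, length_alternatingWord]

lemma exists_mul_mem_closure_forall_not_isRightDescent (I : Set B) (w : W) :
    ∃ u ∈ Subgroup.closure (cs.simple '' I), ∀ t ∈ I, ¬cs.IsRightDescent (w * u) t := by
  set H := Subgroup.closure (cs.simple '' I)
  set u := Function.argminOn (fun u => ℓ (w * u)) (H : Set W) ⟨1, H.one_mem⟩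
  have hu : u ∈ H := Function.argminOn_mem _ _ _
  refine ⟨u, hu, fun t ht hdesc => Function.not_lt_argminOn (fun u => ℓ (w * u)) (H : Set W)
    (mul_mem hu (Subgroup.subset_closure ⟨t, ht, rfl⟩)) ?_⟩
  rw [← mul_assoc]
  exact hdesc

def IsGeometricRepresentation (ρ : W →* ((B →₀ ℝ) ≃ₗ[ℝ] (B →₀ ℝ))) : Prop :=
  ∀ (s : B) (v : B →₀ ℝ), ρ (cs.simple s) v = v - (2 * cForm M (simpleRoot s) v) • simpleRoot s

def roots (ρ : W →* ((B →₀ ℝ) ≃ₗ[ℝ] (B →₀ ℝ))) : Set (B →₀ ℝ) :=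
  {β | ∃ w t, ρ w (simpleRoot t) = β}

variable {ρ : W →* ((B →₀ ℝ) ≃ₗ[ℝ] (B →₀ ℝ))}

lemma simpleRoot_mem_roots (t : B) : simpleRoot t ∈ roots ρ := ⟨1, t, by simp⟩

lemma apply_mem_roots {β : B →₀ ℝ} (hβ : β ∈ roots ρ) (w : W) : ρ w β ∈ roots ρ := by
  obtain ⟨v, t, rfl⟩ := hβ
  exact ⟨w * v, t, by simp⟩

namespace IsGeometricRepresentation

variable {cs} (hρ : cs.IsGeometricRepresentation ρ)
include hρ

lemma simple_apply (a : B) (v : B →₀ ℝ) :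
    ρ (cs.simple a) v = v - (2 * M.form (simpleRoot a) v) • simpleRoot a := by
  rw [hρ, CoxeterMatrix.cForm_simpleRoot]

lemma simple_apply_simpleRoot (a b : B) :
    ρ (cs.simple a) (simpleRoot b) = simpleRoot b - (2 * M.formCoeff a b) • simpleRoot a := by
  rw [hρ.simple_apply, CoxeterMatrix.form_simpleRoot_simpleRoot]

lemma simple_apply_simpleRoot_self (a : B) :
    ρ (cs.simple a) (simpleRoot a) = -simpleRoot a := by
  rw [hρ.simple_apply_simpleRoot, CoxeterMatrix.formCoeff_self]
  module

lemma simple_apply_apply_of_ne {a b : B} (h : b ≠ a) (v : B →₀ ℝ) :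
    ρ (cs.simple a) v b = v b := by
  simp [hρ.simple_apply, simpleRoot_apply_of_ne h]

lemma form_simple_apply (a : B) (x y : B →₀ ℝ) :
    M.form (ρ (cs.simple a) x) (ρ (cs.simple a) y) = M.form x y := by
  simp only [hρ.simple_apply, map_sub, map_smul, LinearMap.sub_apply, LinearMap.smul_apply,
    smul_eq_mul, CoxeterMatrix.form_simpleRoot_simpleRoot, CoxeterMatrix.formCoeff_self,
    M.form_comm x (simpleRoot a)]
  ring

lemma form_apply (w : W) (x y : B →₀ ℝ) : M.form (ρ w x) (ρ w y) = M.form x y := by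
  induction w using cs.simple_induction generalizing x y with
  | simple a => exact hρ.form_simple_apply a x y
  | one => simp
  | mul w w' hw hw' => simp [hw, hw']

lemma form_self_of_mem_roots {β : B →₀ ℝ} (hβ : β ∈ roots ρ) : M.form β β = 1 := by
  obtain ⟨w, t, rfl⟩ := hβ
  rw [hρ.form_apply, CoxeterMatrix.form_simpleRoot_simpleRoot, CoxeterMatrix.formCoeff_self]

lemma neg_mem_roots {β : B →₀ ℝ} (hβ : β ∈ roots ρ) : -β ∈ roots ρ := by
  obtain ⟨w, t, rfl⟩ := hβ
  exact ⟨w * cs.simple t, t, by simp [hρ.simple_apply_simpleRoot_self]⟩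

lemma alternatingWord_apply_simpleRoot {a b : B} (c : ℕ → ℝ) (hc0 : c 0 = 0) (hc1 : c 1 = 1)
    (hc : ∀ k, c (k + 2) = -2 * M.formCoeff a b * c (k + 1) - c k) (k : ℕ) :
    ρ (π (alternatingWord a b k)) (simpleRoot a) =
      c (k + 1) • simpleRoot (if Even k then a else b) +
        c k • simpleRoot (if Even k then b else a) := by
  induction k with
  | zero => simp [alternatingWord, hc0, hc1]
  | succ k ih =>
    rw [alternatingWord_succ', wordProd_cons, map_mul, LinearEquiv.mul_apply, ih, hc]
    by_cases he : Even k
    · simp only [he, if_true, Nat.even_add_one, not_true, if_false, map_add, map_smul,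
        hρ.simple_apply_simpleRoot, M.formCoeff_self, M.formCoeff_comm b a]
      module
    · simp only [he, if_false, Nat.even_add_one, not_false_iff, if_true, map_add, map_smul,
        hρ.simple_apply_simpleRoot, M.formCoeff_self]
      module

lemma exists_nonneg_alternatingWord_apply_simpleRoot {a b : B} (hab : a ≠ b) {k : ℕ}
    (hk : M a b = 0 ∨ k < M a b) :
    ∃ p q : ℝ, 0 ≤ p ∧ 0 ≤ q ∧
      ρ (π (alternatingWord a b k)) (simpleRoot a) = p • simpleRoot a + q • simpleRoot b := by
  obtain ⟨c, hc0, hc1, hc, hck, hck'⟩ := M.exists_nonneg_seq_formCoeff hab hk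
  rw [hρ.alternatingWord_apply_simpleRoot c hc0 hc1 hc]
  by_cases he : Even k
  · exact ⟨c (k + 1), c k, hck', hck, by simp [he]⟩
  · exact ⟨c k, c (k + 1), hck, hck', by simp [he, add_comm]⟩

/-- Humphreys, *Reflection groups and Coxeter groups*, Theorem 5.4. Writing `w = v u` with `u`
in the dihedral subgroup generated by `s_t` and a right descent `s_t'` of `w`, and `v` shortest,
`u α_t` is a nonnegative combination of `α_t` and `α_t'`, which `v` maps to positive roots. -/
theorem pos_apply_simpleRoot_of_not_isRightDescent {w : W} {t : B}
    (hwt : ¬cs.IsRightDescent w t) : 0 < ρ w (simpleRoot t) := by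
  induction hn : ℓ w using Nat.strong_induction_on generalizing w t with
  | _ n ih =>
  obtain rfl | hw1 := eq_or_ne w 1
  · simpa using simpleRoot_pos t
  obtain ⟨t', hwt'⟩ := cs.exists_rightDescent_of_ne_one hw1
  have htt' : t ≠ t' := by rintro rfl; exact hwt hwt'
  obtain ⟨v, ω, hω, rfl, hlen, hvt, hvt'⟩ :=
    cs.exists_mul_wordProd_forall_not_isRightDescent w t t'
  have hv : ℓ v < n := by
    rcases ω with _ | ⟨c, ω⟩
    · simp only [wordProd_nil, mul_one] at hwt'
      exact (hvt' hwt').elim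
    · simp only [List.length_cons] at hlen
      omega
  have hred := cs.isReduced_of_length_mul_wordProd hlen
  obtain ⟨k, hωk, hk⟩ := cs.exists_alternatingWord_of_isReduced hω hred
    (cs.not_isRightDescent_of_length_mul (by rw [hred.eq]; exact hlen) hwt)
  obtain ⟨p, q, hp, hq, hpq⟩ := hρ.exists_nonneg_alternatingWord_apply_simpleRoot htt' hk
  have hvt_pos := ih _ hv hvt rfl
  have hvt'_pos := ih _ hv hvt' rfl
  have hnonneg : 0 ≤ ρ (v * π ω) (simpleRoot t) := by
    rw [map_mul, LinearEquiv.mul_apply, hωk, hpq, map_add, map_smul, map_smul]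
    positivity
  exact hnonneg.lt_of_ne' (by simpa using (simpleRoot_pos t).ne')

theorem apply_simpleRoot_neg_of_isRightDescent {w : W} {t : B} (h : cs.IsRightDescent w t) :
    ρ w (simpleRoot t) < 0 := by
  have h' : ¬cs.IsRightDescent (w * cs.simple t) t := by
    rwa [← cs.isRightDescent_iff_not_isRightDescent_mul]
  simpa [hρ.simple_apply_simpleRoot_self] using hρ.pos_apply_simpleRoot_of_not_isRightDescent h'

theorem pos_or_neg_of_mem_roots {β : B →₀ ℝ} (hβ : β ∈ roots ρ) : 0 < β ∨ β < 0 := by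
  obtain ⟨w, t, rfl⟩ := hβ
  by_cases h : cs.IsRightDescent w t
  · exact Or.inr (hρ.apply_simpleRoot_neg_of_isRightDescent h)
  · exact Or.inl (hρ.pos_apply_simpleRoot_of_not_isRightDescent h)

lemma exists_apply_simpleRoot_neg_of_ne_one {w : W} (hw : w ≠ 1) :
    ∃ t, ρ w (simpleRoot t) < 0 :=
  (cs.exists_rightDescent_of_ne_one hw).imp fun _ => hρ.apply_simpleRoot_neg_of_isRightDescent

lemma eq_simpleRoot_of_simple_apply_neg {β : B →₀ ℝ} {c : B} (hβ : β ∈ roots ρ)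
    (hpos : 0 < β) (hneg : ρ (cs.simple c) β < 0) : β = simpleRoot c := by
  have hsupp : β = Finsupp.single c (β c) := by
    ext b
    by_cases hbc : b = c
    · simp [hbc]
    · have h1 := Finsupp.le_def.1 hneg.le b
      rw [hρ.simple_apply_apply_of_ne hbc] at h1
      simp [Finsupp.single_eq_of_ne hbc, le_antisymm h1 (Finsupp.le_def.1 hpos.le b)]
  have hform := hρ.form_self_of_mem_roots hβ
  rw [hsupp, M.form_single_single, M.formCoeff_self, mul_one] at hform
  have h0 : 0 ≤ β c := Finsupp.le_def.1 hpos.le c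
  have hc : β c = 1 := by nlinarith
  rw [hsupp, hc, simpleRoot]

/-- The inversion set grows by at most one root per simple reflection. -/
theorem finite_setOf_inversions (w : W) : {β ∈ roots ρ | 0 < β ∧ ρ w β < 0}.Finite := by
  induction w using cs.simple_induction_left with
  | one =>
    refine Set.finite_empty.subset fun β ⟨_, hpos, hneg⟩ => ?_
    rw [map_one, LinearEquiv.coe_one, id_eq] at hneg
    exact lt_asymm hpos hneg
  | mul_simple_left u c hu =>
    refine (hu.insert (ρ u⁻¹ (simpleRoot c))).subset ?_
    rintro β ⟨hβ, hpos, hneg⟩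
    rw [map_mul, LinearEquiv.mul_apply] at hneg
    rcases hρ.pos_or_neg_of_mem_roots (apply_mem_roots hβ u) with hu_pos | hu_neg
    · left
      rw [← hρ.eq_simpleRoot_of_simple_apply_neg (apply_mem_roots hβ u) hu_pos hneg]
      simp [← LinearEquiv.mul_apply]
    · exact Or.inr ⟨hβ, hpos, hu_neg⟩

theorem infinite_roots [Infinite W] : (roots ρ).Infinite := by
  intro hfin
  have := hfin.to_subtype
  let f : W → roots ρ → roots ρ := fun w β => ⟨ρ w β, apply_mem_roots β.2 w⟩
  have hf : Function.Injective f := by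
    intro w₁ w₂ h
    by_contra hne
    obtain ⟨t, ht⟩ :=
      hρ.exists_apply_simpleRoot_neg_of_ne_one (inv_mul_eq_one.not.2 (Ne.symm hne))
    have h' := congrArg Subtype.val (congrFun h ⟨_, simpleRoot_mem_roots t⟩)
    simp only [f] at h'
    rw [map_mul, LinearEquiv.mul_apply, h', ← LinearEquiv.mul_apply, ← map_mul,
      inv_mul_cancel, map_one, LinearEquiv.coe_one, id_eq] at ht
    exact lt_asymm ht (simpleRoot_pos t)
  exact not_finite_iff_infinite.2 ‹Infinite W› (Finite.of_injective f hf)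

theorem infinite_posRoots [Infinite W] : {β ∈ roots ρ | 0 < β}.Infinite := by
  intro hfin
  refine hρ.infinite_roots ((hfin.union (hfin.image Neg.neg)).subset fun β hβ => ?_)
  rcases hρ.pos_or_neg_of_mem_roots hβ with hpos | hneg
  · exact Or.inl ⟨hβ, hpos⟩
  · exact Or.inr ⟨-β, ⟨hρ.neg_mem_roots hβ, neg_pos.2 hneg⟩, neg_neg β⟩

lemma simple_apply_pos_of_apply_eq_zero {β : B →₀ ℝ} {a b : B} (hβ : 0 < β) (hab : M.Adj a b)
    (ha : 0 < β a) (hb : β b = 0) :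
    0 < ρ (cs.simple b) β ∧ 0 < ρ (cs.simple b) β b := by
  have hbpos : 0 < ρ (cs.simple b) β b := by
    have := M.form_simpleRoot_neg hβ.le hab ha hb
    rw [hρ.simple_apply, Finsupp.sub_apply, Finsupp.smul_apply, simpleRoot_apply_self, hb,
      smul_eq_mul]
    linarith
  refine ⟨lt_of_le_of_ne (Finsupp.le_def.2 fun c => ?_) fun h => by simp [← h] at hbpos, hbpos⟩
  obtain rfl | hcb := eq_or_ne c b
  · exact hbpos.le
  · rw [hρ.simple_apply_apply_of_ne hcb]
    exact Finsupp.le_def.1 hβ.le c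

lemma setOf_pos_apply_subset {a b : B} (hab : M.Adj a b) :
    {β ∈ roots ρ | 0 < β ∧ 0 < β a} ⊆
      {β ∈ roots ρ | 0 < β ∧ 0 < β b} ∪
        ρ (cs.simple b) ⁻¹' {β ∈ roots ρ | 0 < β ∧ 0 < β b} := by
  rintro β ⟨hβ, hpos, ha⟩
  obtain hb | hb := (Finsupp.le_def.1 hpos.le b).lt_or_eq
  · exact Or.inl ⟨hβ, hpos, hb⟩
  · obtain ⟨h1, h2⟩ := hρ.simple_apply_pos_of_apply_eq_zero hpos hab ha hb.symm
    exact Or.inr ⟨apply_mem_roots hβ _, h1, h2⟩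

lemma infinite_setOf_pos_apply_of_reflTransGen {a b : B} (h : Relation.ReflTransGen M.Adj a b)
    (ha : {β ∈ roots ρ | 0 < β ∧ 0 < β a}.Infinite) :
    {β ∈ roots ρ | 0 < β ∧ 0 < β b}.Infinite := by
  induction h with
  | refl => exact ha
  | tail _ hcb ih =>
    exact fun hfin => ih ((hfin.union (hfin.preimage (ρ _).injective.injOn)).subset
      (hρ.setOf_pos_apply_subset hcb))

lemma exists_mem_setOf_pos_apply_pos_apply (s : B) {a b : B}
    (h : Relation.ReflTransGen M.Adj a b)
    (ha : ∃ β ∈ {β ∈ roots ρ | 0 < β ∧ 0 < β s}, 0 < β a) :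
    ∃ β ∈ {β ∈ roots ρ | 0 < β ∧ 0 < β s}, 0 < β b := by
  induction h with
  | refl => exact ha
  | @tail c d _ hcd ih =>
    obtain ⟨β, ⟨hβ, hpos, hs⟩, hc⟩ := ih
    obtain hd | hd := (Finsupp.le_def.1 hpos.le d).lt_or_eq
    · exact ⟨β, ⟨hβ, hpos, hs⟩, hd⟩
    obtain ⟨h1, h2⟩ := hρ.simple_apply_pos_of_apply_eq_zero hpos hcd hc hd.symm
    refine ⟨_, ⟨apply_mem_roots hβ _, h1, ?_⟩, h2⟩
    obtain rfl | hsd := eq_or_ne s d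
    · exact h2
    · rwa [hρ.simple_apply_apply_of_ne hsd]

/-- Deodhar's lemma. If only finitely many positive roots involved `α_s`, their supports would
form a finite set closed under adjacency, hence all of `B`; then some `α_x` would be involved in
infinitely many positive roots, and reflecting along a path from `x` to `s` carries these to
positive roots involving `α_s`. -/
theorem infinite_setOf_pos_apply [Infinite W] (hirr : ∀ a b, Relation.ReflTransGen M.Adj a b)
    (s : B) : {β ∈ roots ρ | 0 < β ∧ 0 < β s}.Infinite := by
  intro hfin
  have : Finite B := by
    refine Set.finite_univ_iff.1 ((hfin.biUnion fun β _ => β.support.finite_toSet).subset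
      fun x _ => ?_)
    obtain ⟨β, hβ, hx⟩ := hρ.exists_mem_setOf_pos_apply_pos_apply s (hirr s x)
      ⟨simpleRoot s, ⟨simpleRoot_mem_roots s, simpleRoot_pos s, by simp [simpleRoot_apply_self]⟩,
        by simp [simpleRoot_apply_self]⟩
    exact Set.mem_biUnion hβ (Finsupp.mem_support_iff.2 hx.ne')
  obtain ⟨x, hx⟩ : ∃ x, {β ∈ roots ρ | 0 < β ∧ 0 < β x}.Infinite := by
    by_contra! h
    refine hρ.infinite_posRoots ((Set.finite_iUnion h).subset fun β ⟨hβ, hpos⟩ => ?_)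
    obtain ⟨x, hx⟩ := (Finsupp.lt_def.1 hpos).2
    exact Set.mem_iUnion.2 ⟨x, hβ, hpos, hx⟩
  exact hρ.infinite_setOf_pos_apply_of_reflTransGen (hirr x s) hx hfin

theorem eq_one_of_forall_ne [Infinite W] (hirr : ∀ a b, Relation.ReflTransGen M.Adj a b)
    {s : B} {w : W} (hw : ∀ t ≠ s, 0 < ρ w (simpleRoot t) ∧ ρ w (simpleRoot t) s = 0) :
    w = 1 := by
  by_contra hw1
  obtain ⟨t, ht⟩ := hρ.exists_apply_simpleRoot_neg_of_ne_one hw1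
  obtain rfl : t = s := by
    by_contra hts
    exact lt_asymm ht (hw t hts).1
  have hcoord := (ρ w).toLinearMap.apply_apply_eq_mul_of_forall_ne fun u hu => (hw u hu).2
  have hneg : ρ w (simpleRoot t) t < 0 := by
    refine (Finsupp.le_def.1 ht.le t).lt_of_ne fun h0 => ?_
    have := hcoord ((ρ w).symm (simpleRoot t))
    simp [h0, simpleRoot_apply_self] at this
  refine hρ.infinite_setOf_pos_apply hirr t ((hρ.finite_setOf_inversions w).subset ?_)
  rintro β ⟨hβ, hpos, hβt⟩
  refine ⟨hβ, hpos, (hρ.pos_or_neg_of_mem_roots (apply_mem_roots hβ w)).resolve_left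
    fun h => ?_⟩
  have h1 : 0 ≤ ρ w β t := Finsupp.le_def.1 h.le t
  have h2 := hcoord β
  rw [LinearEquiv.coe_coe] at h2
  linarith [mul_neg_of_pos_of_neg hβt hneg]

lemma apply_apply_eq_of_mem_closure {s : B} {g : W}
    (hg : g ∈ Subgroup.closure (cs.simple '' (Set.univ \ {s}))) (x : B →₀ ℝ) :
    ρ g x s = x s := by
  induction hg using Subgroup.closure_induction generalizing x with
  | mem g hg =>
    obtain ⟨t, ⟨-, ht⟩, rfl⟩ := hg
    exact hρ.simple_apply_apply_of_ne (Ne.symm ht) x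
  | one => simp
  | mul g h _ _ hg hh => simp [hg, hh]
  | inv g _ hg => simpa using (hg (ρ g⁻¹ x)).symm

theorem eq_one_of_image_simpleRoot_subset [Infinite W]
    (hirr : ∀ a b, Relation.ReflTransGen M.Adj a b) {s : B} {w : W}
    (hw : (fun v => ρ w v) '' (simpleRoot '' (Set.univ \ {s})) ⊆
      simpleRoot '' (Set.univ \ {s})) :
    w = 1 := by
  refine hρ.eq_one_of_forall_ne hirr (s := s) fun t ht => ?_
  obtain ⟨t', ⟨-, ht'⟩, h⟩ := hw ⟨_, ⟨t, ⟨trivial, ht⟩, rfl⟩, rfl⟩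
  rw [← show simpleRoot t' = ρ w (simpleRoot t) from h]
  exact ⟨simpleRoot_pos t', simpleRoot_apply_of_ne (Ne.symm ht')⟩

theorem normalizer_closure_le [Infinite W] (hirr : ∀ a b, Relation.ReflTransGen M.Adj a b)
    (s : B) :
    Subgroup.normalizer (Subgroup.closure (cs.simple '' (Set.univ \ {s}))) ≤
      Subgroup.closure (cs.simple '' (Set.univ \ {s})) := by
  intro w hw
  obtain ⟨u, hu, hdesc⟩ :=
    cs.exists_mul_mem_closure_forall_not_isRightDescent (Set.univ \ {s}) w
  suffices w * u = 1 by
    rw [mul_eq_one_iff_eq_inv.1 this]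
    exact inv_mem hu
  set v := w * u
  refine hρ.eq_one_of_forall_ne hirr fun t ht =>
    ⟨hρ.pos_apply_simpleRoot_of_not_isRightDescent (hdesc t ⟨trivial, ht⟩), ?_⟩
  have hconj : v * cs.simple t * v⁻¹ ∈ Subgroup.closure (cs.simple '' (Set.univ \ {s})) :=
    (Subgroup.mem_normalizer_iff.1 (mul_mem hw (Subgroup.le_normalizer hu)) _).1
      (Subgroup.subset_closure ⟨t, ⟨trivial, ht⟩, rfl⟩)
  have := hρ.apply_apply_eq_of_mem_closure hconj (ρ v (simpleRoot t))
  rw [map_mul, map_mul, LinearEquiv.mul_apply, LinearEquiv.mul_apply,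
    ← LinearEquiv.mul_apply (ρ v⁻¹), ← map_mul, inv_mul_cancel, map_one, LinearEquiv.coe_one,
    id_eq, hρ.simple_apply_simpleRoot_self, map_neg, Finsupp.neg_apply] at this
  linarith

end IsGeometricRepresentation

end CoxeterSystem

/-- For an irreducible infinite Coxeter system, `s ∈ S` and
`I = S ∖ {s}`: the set `N_I = {w | w · Π_I = Π_I}` is trivial, and the
normalizer of `W_I` equals `W_I`. -/
theorem stmt_14 {B W : Type*} [Group W] {M : CoxeterMatrix B}
    (cs : CoxeterSystem M W)
    (hirr : ∀ s t : B, Relation.ReflTransGen (fun a b => a ≠ b ∧ M a b ≠ 2) s t)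
    (hinf : Infinite W)
    (ρ : W →* ((B →₀ ℝ) ≃ₗ[ℝ] (B →₀ ℝ)))
    (hρ : ∀ (s : B) (v : B →₀ ℝ),
      ρ (cs.simple s) v = v - (2 * cForm M (simpleRoot s) v) • simpleRoot s)
    (s : B) :
    {w : W | (fun v => ρ w v) '' (simpleRoot '' (Set.univ \ {s})) =
        simpleRoot '' (Set.univ \ {s})} = {1} ∧
    Subgroup.normalizer (Subgroup.closure (cs.simple '' (Set.univ \ {s}))) =
      Subgroup.closure (cs.simple '' (Set.univ \ {s})) := by
  have hρ' : cs.IsGeometricRepresentation ρ := hρ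
  refine ⟨Set.eq_singleton_iff_unique_mem.2 ⟨by simp, fun w hw =>
    hρ'.eq_one_of_image_simpleRoot_subset hirr (Eq.subset hw)⟩,
    le_antisymm (hρ'.normalizer_closure_le hirr s) Subgroup.le_normalizer⟩
end
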